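/- Let a, b, b₁ > 0 and ε ∈ (0,π). Let u₀ : ℝ → ℝ be a smooth 2π-periodic function, not identically zero, with u₀(x) = 0 for every x ∈ [0,2π] \ (0,ε). Define u(x,t) = u₀(x − (a/b)t). Then u is smooth and 2π-periodic in x, u satisfies u_t − b₁u_{txx} + b u_{txxxx} + a u_{xxxxx} + (a/b) u_x − (ab₁/b) u_{xxx} = 0 pointwise on ℝ × ℝ, u(x,t) = 0 for all x ∈ (2π−ε, 2π) and t ∈ (0, b(2π−2ε)/a), but u is not identically zero. In particular, the unique continuation property from ω = (2π−ε,2π) fails in any time T ≤ b(2π−2ε)/a. -/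

import Mathlib

open Real MeasureTheory

/-- Partial derivative in the spatial variable `x` (first argument). -/
noncomputable def pdx (u : ℝ → ℝ → ℝ) : ℝ → ℝ → ℝ := fun x t => deriv (fun y => u y t) x

/-- Partial derivative in the time variable `t` (second argument). -/
noncomputable def pdt (u : ℝ → ℝ → ℝ) : ℝ → ℝ → ℝ := fun x t => deriv (fun τ => u x τ) t

private lemma pdx_shift' (f : ℝ → ℝ) (c : ℝ) :
    pdx (fun x t => f (x - c*t)) = fun x t => deriv f (x - c*t) := by
  funext x t
  simp only [pdx]
  exact deriv_comp_sub_const f (c*t) x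

private lemma pdx_shift (f : ℝ → ℝ) (c k : ℝ) :
    pdx (fun x t => k * f (x - c*t)) = fun x t => k * deriv f (x - c*t) := by
  funext x t
  simp only [pdx]
  rw [deriv_const_mul_field]
  rw [deriv_comp_sub_const f (c*t) x]

private lemma pdt_shift' (f : ℝ → ℝ) (hf : Differentiable ℝ f) (c : ℝ) :
    pdt (fun x t => f (x - c*t)) = fun x t => -c * deriv f (x - c*t) := by
  funext x t
  simp only [pdt]
  have hl : HasDerivAt (fun τ : ℝ => x - c*τ) (-c) t := by
    simpa using ((hasDerivAt_id t).const_mul c).const_sub x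
  have h := (hf (x - c*t)).hasDerivAt.comp t hl
  have h' : HasDerivAt (fun τ : ℝ => f (x - c*τ)) (-c * deriv f (x - c*t)) t := by
    simpa [Function.comp_def, mul_comm] using h
  exact h'.deriv

/-- finite propagation speed for the linear fifth-order KdV–BBM equation
with `q = a/b`, `p = -ab₁/b`, `r = 0`: the travelling wave `u(x,t) = u₀(x - (a/b)t)`
solves the equation, vanishes on `(2π-ε,2π) × (0, b(2π-2ε)/a)`, but is not identically
zero; hence the unique continuation property from `ω = (2π-ε,2π)` fails in any time
`T ≤ b(2π-2ε)/a`. -/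
theorem kdv_bbm_ucp_sharp
    (a b b₁ ε : ℝ) (ha : 0 < a) (hb : 0 < b) (hb₁ : 0 < b₁) (hε : ε ∈ Set.Ioo 0 π)
    (u₀ : ℝ → ℝ) (hu₀ : ContDiff ℝ (⊤ : ℕ∞) u₀) (hu₀per : Function.Periodic u₀ (2*π))
    (hu₀ne : ∃ x, u₀ x ≠ 0)
    (hu₀supp : ∀ x ∈ Set.Icc (0:ℝ) (2*π) \ Set.Ioo 0 ε, u₀ x = 0)
    (u : ℝ → ℝ → ℝ) (hu : u = fun x t => u₀ (x - (a/b)*t)) :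
    ContDiff ℝ (⊤ : ℕ∞) (fun z : ℝ × ℝ => u z.1 z.2)
    ∧ (∀ t, Function.Periodic (fun x => u x t) (2*π))
    ∧ (∀ x t : ℝ,
        pdt u x t - b₁ * pdx (pdx (pdt u)) x t + b * pdx (pdx (pdx (pdx (pdt u)))) x t
          + a * pdx (pdx (pdx (pdx (pdx u)))) x t
          + (a/b) * pdx u x t - (a*b₁/b) * pdx (pdx (pdx u)) x t = 0)
    ∧ (∀ x ∈ Set.Ioo (2*π - ε) (2*π), ∀ t ∈ Set.Ioo 0 (b*(2*π - 2*ε)/a), u x t = 0)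
    ∧ ¬ (∀ x t : ℝ, u x t = 0) := by
  subst hu
  set c : ℝ := a / b with hc
  have hbne : b ≠ 0 := ne_of_gt hb
  -- iterated derivatives
  set d1 : ℝ → ℝ := deriv u₀ with hd1
  set d2 : ℝ → ℝ := deriv d1 with hd2
  set d3 : ℝ → ℝ := deriv d2 with hd3
  set d4 : ℝ → ℝ := deriv d3 with hd4
  set d5 : ℝ → ℝ := deriv d4 with hd5
  refine ⟨?_, ?_, ?_, ?_, ?_⟩
  · exact hu₀.comp ((contDiff_fst.sub (contDiff_const.mul contDiff_snd)) :
      ContDiff ℝ (⊤ : ℕ∞) (fun z : ℝ × ℝ => z.1 - c * z.2))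
  · intro t x
    have : x + 2*π - c*t = (x - c*t) + 2*π := by ring
    simp only [this, hu₀per (x - c*t)]
  · intro x t
    have h1 := pdx_shift' u₀ c
    have h2 := pdx_shift' d1 c
    have h3 := pdx_shift' d2 c
    have h4 := pdx_shift' d3 c
    have h5 := pdx_shift' d4 c
    have ht := pdt_shift' u₀ (hu₀.differentiable (by simp)) c
    have k2 := pdx_shift d1 c (-c)
    have k3 := pdx_shift d2 c (-c)
    have k4 := pdx_shift d3 c (-c)
    have k5 := pdx_shift d4 c (-c)
    rw [ht, ← hd1]
    rw [h1, ← hd1, h2, ← hd2, h3, ← hd3, h4, ← hd4, h5, ← hd5]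
    rw [k2, ← hd2, k3, ← hd3, k4, ← hd4, k5, ← hd5]
    set y := x - c*t
    have : -c * d1 y - b₁ * (-c * d3 y) + b * (-c * d5 y) + a * d5 y
        + a/b * d1 y - a*b₁/b * d3 y = 0 := by
      rw [hc]; field_simp; ring
    simpa using this
  · rintro x ⟨hx1, hx2⟩ t ⟨ht1, ht2⟩
    simp only
    apply hu₀supp
    have hct : c * t < 2*π - 2*ε := by
      have : c * t < c * (b*(2*π - 2*ε)/a) := by
        apply mul_lt_mul_of_pos_left ht2 (div_pos ha hb)
      calc c * t < c * (b*(2*π - 2*ε)/a) := this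
        _ = 2*π - 2*ε := by field_simp [hc]; rw [hc, div_mul_cancel₀ a hbne]; ring
    have hct0 : 0 < c * t := mul_pos (div_pos ha hb) ht1
    refine ⟨⟨by linarith [hε.1], by linarith⟩, ?_⟩
    simp only [Set.mem_Ioo, not_and, not_lt]
    intro _
    linarith [hε.1]
  · intro h
    obtain ⟨x, hx⟩ := hu₀ne
    have := h x 0
    simp at this
    exact hx this
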